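/- Assume Ω¹_{R̃/W₂(k)} is flat as a W₂(k)-module. Let B be a free R̃-module, d̃: B → B an R̃-linear map, A = B/pB, d = d̃ mod p, and let ∇₀ be a connection on A relative to k; set κ = ∇₀∘d − (d ⊗ id)∘∇₀: A → A ⊗_R Ω¹_{R/k} (an R-linear map). Let ∇̃ be the Frobenius-pullback connection on F̃*B determined by ∇₀, and let F̃*d̃ = id_{R̃} ⊗ d̃: F̃*B → F̃*B. Then: (i) the commutator Θ = ∇̃∘(F̃*d̃) − ((F̃*d̃) ⊗ id)∘∇̃ takes values in p·(F̃*B ⊗_{R̃} Ω¹_{R̃/W₂(k)}); (ii) the assignment a ⊗ η ↦ (1 ⊗ a) ⊗ C⁻¹_{(R̃,F̃)}(η) gives a well-defined additive map A ⊗_R Ω¹_{R/k} → F*A ⊗_R Ω¹_{R/k}, and there is a unique R-linear map C⁻¹(κ): F*A → F*A ⊗_R Ω¹_{R/k} sending 1 ⊗ x to the image of κ(x) under this map; (iii) the map F*A → F*A ⊗_R Ω¹_{R/k} obtained from Θ by dividing by p and reducing modulo p equals C⁻¹(κ). (That is, [∇̃, F̃*d̃]/p = C⁻¹_{(R̃,F̃)}(κ).)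 -/

import Mathlib

/-!
Statement 10: (Setting of Statements 8 and 9.)  Let `B` be a free `R̃`-module with an
`R̃`-linear map `d̃ : B → B`, `A = B/pB`, `d = d̃ mod p`, `∇₀` a connection on `A` relative
to `k`, and `κ = ∇₀∘d − (d ⊗ id)∘∇₀` the Kodaira–Spencer map.  Let `∇̃` be the
Frobenius-pullback connection on `F̃^*B` determined by `∇₀` and `F̃^*d̃ = id ⊗ d̃`.  Then:
(i) the commutator `Θ = ∇̃∘(F̃^*d̃) − ((F̃^*d̃) ⊗ id)∘∇̃` takes values in `p·(F̃^*B ⊗ Ω¹)`;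
(ii) `a ⊗ η ↦ (1 ⊗ a) ⊗ C⁻¹(η)` gives a well-defined additive map
`A ⊗ Ω¹_{R/k} → F^*A ⊗ Ω¹_{R/k}` and there is a unique `R`-linear
`C⁻¹(κ) : F^*A → F^*A ⊗ Ω¹_{R/k}` with `1 ⊗ x ↦` the image of `κ(x)`;
(iii) `[∇̃, F̃^*d̃]/p` modulo `p` equals `C⁻¹(κ)`.

As licensed by the context, we use the identifications `Ω¹_{R/k} = Ω¹_{R̃/W₂}/p`,
`A = B/pB`, `F^*A = (F̃^*A)/p`, and express "divide by `p` and reduce mod `p`" by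
quantifying over elements `t` with `Θ(ξ) = p·t`.  The canonical maps `F̃^*` (pullback of
forms), `C⁻¹` (inverse Cartier operator, Statement 9), `∇̃` (Statement 8), `F̃^*d̃`, and the
reduction `F̃^*B ⊗ Ω¹ → F^*A ⊗ Ω¹_{R/k}` are each taken as hypotheses characterized
uniquely by their stated defining properties.
-/

open scoped TensorProduct

set_option synthInstance.maxHeartbeats 1000000
set_option maxHeartbeats 1000000

universe u

/-- A copy of the ring `R`, serving as the source of the ring endomorphism `f : R → R`. -/
def TwistSrc {R : Type u} [CommRing R] (f : R →+* R) : Type u := R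

instance {R : Type u} [CommRing R] (f : R →+* R) : CommRing (TwistSrc f) :=
  inferInstanceAs (CommRing R)

/-- `R` is an algebra over its copy `TwistSrc f` via `f`. -/
instance {R : Type u} [CommRing R] (f : R →+* R) : Algebra (TwistSrc f) R :=
  (show TwistSrc f →+* R from f).toAlgebra

instance (priority := 100) {R : Type u} [CommRing R] (f : R →+* R) (V : Type*)
    [AddCommGroup V] [Module R V] : Module (TwistSrc f) V :=
  inferInstanceAs (Module R V)

/-- The base change `R ⊗_{f,R} V` of an `R`-module `V` along the ring endomorphism
`f : R → R`; it is an `R`-module via the left tensor factor. -/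
abbrev Twist {R : Type u} [CommRing R] (f : R →+* R) (V : Type*) [AddCommGroup V]
    [Module R V] : Type _ :=
  TensorProduct (TwistSrc f) R V


/-!
Write `δ = L₀ ∘ d̃ − (d̃ ⊗ 1) ∘ L₀ : B → B ⊗ Ω¹` for the commutator of `d̃` with the chosen lift
`L₀` of `∇₀`; it lifts `κ`. On generators `Θ (f ⊗ x) = f · H (δ x)`: the `(1 ⊗ d̃x) ⊗ df` terms
cancel and `F̃^*d̃ ⊗ 1` commutes with `H`. Since `F̃ b = b ^ p + p m`, the form `d(F̃ b)` is
divisible by `p`, so `F̃^*` and `H` are divisible by `p`, and `C⁻¹` is by definition `F̃^*/p`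
modulo `p`; hence `Θ/p ≡ C⁻¹(κ)`. The choice of `Θ/p` does not matter modulo `p`: over `W₂(k)`
the `p`-torsion is `p W₂(k)`, and by flatness of `Ω¹` and freeness of `B` the same holds in
`F̃^*B ⊗ Ω¹`.
-/

namespace Twist

variable {R : Type u} [CommRing R] {f : R →+* R} {V M : Type*} [AddCommGroup V] [Module R V]
  [AddCommGroup M] [Module R M]

instance free [Module.Free R V] : Module.Free R (Twist f V) :=
  haveI : Module.Free (TwistSrc f) V := ‹Module.Free R V›
  inferInstance

theorem tmul_smul (s r : R) (a : V) :
    s ⊗ₜ[TwistSrc f] (r • a) = (f r * s) ⊗ₜ[TwistSrc f] a :=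
  (TensorProduct.smul_tmul (show TwistSrc f from r) s a).symm

theorem smul_tmul (r s : R) (a : V) :
    r • (s ⊗ₜ[TwistSrc f] a : Twist f V) = (r * s) ⊗ₜ[TwistSrc f] a :=
  TensorProduct.smul_tmul' r s a

theorem tmul_eq_smul_one_tmul (s : R) (a : V) :
    (s ⊗ₜ[TwistSrc f] a : Twist f V) = s • ((1 : R) ⊗ₜ[TwistSrc f] a) := by
  rw [smul_tmul, mul_one]

theorem one_tmul_smul (r : R) (a : V) :
    ((1 : R) ⊗ₜ[TwistSrc f] (r • a) : Twist f V) = f r • ((1 : R) ⊗ₜ[TwistSrc f] a) := by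
  rw [tmul_smul, mul_one, tmul_eq_smul_one_tmul]

def liftSemilinear (K : V →+ M) (hK : ∀ (r : R) (v : V), K (r • v) = f r • K v) :
    Twist f V →ₗ[R] M where
  toFun := TensorProduct.liftAddHom
    (AddMonoidHom.mk' (fun r => (DistribSMul.toAddMonoidHom M r).comp K)
      fun r s => by ext; simp [add_smul])
    fun s r v => by
      change (f s * r) • K v = r • K ((show R from s) • v)
      rw [hK, mul_comm, mul_smul]
  map_add' := map_add _
  map_smul' r z := by
    induction z using TensorProduct.induction_on with
    | zero => simp
    | tmul s v => simp [smul_tmul, mul_smul]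
    | add z w hz hw => simp_all [smul_add]

@[simp]
theorem liftSemilinear_tmul (K : V →+ M) (hK : ∀ (r : R) (v : V), K (r • v) = f r • K v)
    (s : R) (v : V) : liftSemilinear K hK (s ⊗ₜ[TwistSrc f] v) = s • K v :=
  rfl

theorem linearMap_ext {g h : Twist f V →ₗ[R] M}
    (hgh : ∀ v : V, g ((1 : R) ⊗ₜ[TwistSrc f] v) = h ((1 : R) ⊗ₜ[TwistSrc f] v)) : g = h := by
  ext z
  induction z using TensorProduct.induction_on with
  | zero => simp
  | tmul s v => rw [tmul_eq_smul_one_tmul, map_smul, map_smul, hgh]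
  | add z w hz hw => rw [map_add, map_add, hz, hw]

theorem existsUnique_linearMap_quotient (q : R) (K : V →+ M)
    (hK : ∀ (r : R) (v : V), K (r • v) = f r • K v) (hM : ∀ m : M, q • m = 0) :
    ∃! CK : (Twist f V ⧸ LinearMap.range (q • LinearMap.id : Twist f V →ₗ[R] Twist f V)) →ₗ[R] M,
      ∀ v : V, CK (Submodule.mkQ _ ((1 : R) ⊗ₜ[TwistSrc f] v)) = K v := by
  have hker : LinearMap.range (q • LinearMap.id : Twist f V →ₗ[R] Twist f V) ≤
      LinearMap.ker (liftSemilinear K hK) := by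
    rintro _ ⟨z, rfl⟩
    simp [hM]
  refine ⟨Submodule.liftQ _ _ hker, fun v => by simp, fun CK hCK => ?_⟩
  exact Submodule.linearMap_qext _ (linearMap_ext fun v => by simpa using hCK v)

end Twist

namespace TensorProduct

theorem smul_eq_zero_of_quotient_range_smul {R M N : Type*} [CommRing R] [AddCommGroup M]
    [Module R M] [AddCommGroup N] [Module R N] (q : R)
    (t : (M ⧸ LinearMap.range (q • LinearMap.id : M →ₗ[R] M)) ⊗[R] N) : q • t = 0 := by
  induction t using TensorProduct.induction_on with
  | zero => simp
  | tmul x n =>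
    obtain ⟨m, rfl⟩ := Submodule.mkQ_surjective _ x
    have hm : q • m ∈ LinearMap.range (q • LinearMap.id : M →ₗ[R] M) := ⟨m, rfl⟩
    rw [smul_tmul', ← map_smul, Submodule.mkQ_apply, (Submodule.Quotient.mk_eq_zero _).mpr hm,
      zero_tmul]
  | add t u ht hu => rw [smul_add, ht, hu, add_zero]

variable {S : Type*} [CommRing S] {σ : S →+* S} {A M Q N : Type*} [AddCommGroup A] [Module S A]
  [AddCommGroup M] [Module S M] [AddCommGroup Q] [AddCommGroup N] [Module S N]

theorem addMonoidHom_ext {G G' : A ⊗[S] M →+ Q} (h : ∀ a m, G (a ⊗ₜ m) = G' (a ⊗ₜ m)) :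
    G = G' := by
  ext ξ
  induction ξ using TensorProduct.induction_on with
  | zero => simp
  | tmul a m => exact h a m
  | add ξ η hξ hη => rw [map_add, map_add, hξ, hη]

variable [Module S Q]

theorem existsUnique_tmul_semilinear (j : A →+ Q) (hj : ∀ (r : S) (a : A), j (r • a) = σ r • j a)
    (c : M →+ N) (hc : ∀ (r : S) (m : M), c (r • m) = σ r • c m) :
    ∃! G : A ⊗[S] M →+ Q ⊗[S] N, ∀ a m, G (a ⊗ₜ m) = j a ⊗ₜ c m := by
  let tmulHom : Q →+ N →+ Q ⊗[S] N :=
    AddMonoidHom.mk' (fun x => AddMonoidHom.mk' (x ⊗ₜ ·) (tmul_add x))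
      fun x y => by ext; exact add_tmul x y _
  refine ⟨liftAddHom ((tmulHom.comp j).compl₂ c) fun r a m => ?_, fun a m => rfl,
    fun G hG => addMonoidHom_ext fun a m => hG a m⟩
  change j (r • a) ⊗ₜ c m = j a ⊗ₜ c (r • m)
  rw [hj, hc, smul_tmul]

theorem map_smul_of_tmul_semilinear {j : A →+ Q} (hj : ∀ (r : S) (a : A), j (r • a) = σ r • j a)
    {c : M →+ N} {G : A ⊗[S] M →+ Q ⊗[S] N} (hG : ∀ a m, G (a ⊗ₜ m) = j a ⊗ₜ c m) (r : S)
    (ξ : A ⊗[S] M) : G (r • ξ) = σ r • G ξ := by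
  induction ξ using TensorProduct.induction_on with
  | zero => simp
  | tmul a m => rw [smul_tmul', hG, hG, hj, smul_tmul']
  | add ξ η hξ hη => rw [smul_add, map_add, map_add, hξ, hη, smul_add]

end TensorProduct

theorem TruncatedWittVector.exact_lsmul_p (p : ℕ) [Fact p.Prime] (k : Type*) [CommRing k]
    [CharP k p] [PerfectRing k p] :
    Function.Exact (LinearMap.lsmul (TruncatedWittVector p 2 k) (TruncatedWittVector p 2 k) p)
      (LinearMap.lsmul (TruncatedWittVector p 2 k) (TruncatedWittVector p 2 k) p) := by
  have truncate_eq_zero_iff (X : WittVector p k) :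
      WittVector.truncate 2 X = 0 ↔ (p : WittVector p k) ^ 2 ∣ X := by
    rw [← RingHom.mem_ker, WittVector.mem_ker_truncate, ← Ideal.mem_span_singleton,
      WittVector.mem_span_p_pow_iff_le_coeff_eq_zero]
  intro y
  simp only [LinearMap.lsmul_apply, smul_eq_mul, Set.mem_range]
  constructor
  · obtain ⟨Y, rfl⟩ := WittVector.truncate_surjective p 2 k y
    rintro hY
    rw [← map_natCast (WittVector.truncate 2), ← map_mul, truncate_eq_zero_iff] at hY
    obtain ⟨Z, hZ⟩ := hY
    have hYZ : Y = p * Z := by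
      rw [← sub_eq_zero]
      apply WittVector.eq_zero_of_p_mul_eq_zero
      linear_combination hZ
    exact ⟨WittVector.truncate 2 Z, by rw [hYZ, map_mul, map_natCast]⟩
  · rintro ⟨x, rfl⟩
    obtain ⟨X, rfl⟩ := WittVector.truncate_surjective p 2 k x
    rw [← map_natCast (WittVector.truncate 2), ← map_mul, ← map_mul, truncate_eq_zero_iff]
    exact ⟨X, by ring⟩

theorem Module.Flat.exact_lsmul {W M : Type*} [CommRing W] [AddCommGroup M] [Module W M]
    [Module.Flat W M] {q : W} (h : Function.Exact (LinearMap.lsmul W W q) (LinearMap.lsmul W W q)) :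
    Function.Exact (LinearMap.lsmul W M q) (LinearMap.lsmul W M q) := by
  have hcomm : LinearMap.lsmul W M q ∘ₗ (TensorProduct.rid W M : M ⊗[W] W →ₗ[W] M) =
      (TensorProduct.rid W M : M ⊗[W] W →ₗ[W] M) ∘ₗ (LinearMap.lsmul W W q).lTensor M := by
    ext m
    simp
  exact Function.Exact.of_ladder_linearEquiv_of_exact hcomm hcomm (Module.Flat.lTensor_exact M h)

theorem exact_lsmul_natCast_tensor_of_free {W S F M : Type*} [CommRing W] [CommRing S]
    [AddCommGroup F] [Module S F] [Module.Free S F] [AddCommGroup M] [Module S M] [Module W M]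
    [Module.Flat W M] {n : ℕ} (h : Function.Exact (LinearMap.lsmul W W n) (LinearMap.lsmul W W n)) :
    Function.Exact (LinearMap.lsmul S (F ⊗[S] M) n) (LinearMap.lsmul S (F ⊗[S] M) n) := by
  classical
  let ι := Module.Free.ChooseBasisIndex S F
  let e : F ⊗[S] M ≃ₗ[S] ι →₀ M :=
    TensorProduct.congr (Module.Free.chooseBasis S F).repr (LinearEquiv.refl S M) ≪≫ₗ
      TensorProduct.finsuppScalarLeft S M ι
  have : Module.Flat W (ι →₀ M) := Module.Flat.of_linearEquiv (finsuppLequivDFinsupp W)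
  have hcomm : (LinearMap.lsmul W (ι →₀ M) n).toAddMonoidHom.comp e.toAddEquiv.toAddMonoidHom =
      e.toAddEquiv.toAddMonoidHom.comp (LinearMap.lsmul S (F ⊗[S] M) n).toAddMonoidHom := by
    ext t
    simp [Nat.cast_smul_eq_nsmul]
  exact (Function.Exact.iff_of_ladder_addEquiv e.toAddEquiv e.toAddEquiv e.toAddEquiv
    hcomm hcomm).mp (Module.Flat.exact_lsmul h)

theorem AddMonoidHom.map_eq_of_natCast_smul_eq {S T T' : Type*} [CommRing S] [AddCommGroup T]
    [Module S T] [AddCommGroup T'] [Module S T'] {n : ℕ}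
    (hT : Function.Exact (LinearMap.lsmul S T n) (LinearMap.lsmul S T n))
    (hT' : ∀ y : T', (n : S) • y = 0) (ρ : T →+ T') {t u : T} (h : (n : S) • t = (n : S) • u) :
    ρ t = ρ u := by
  obtain ⟨v, hv⟩ := (hT (t - u)).mp (by simp [smul_sub, h])
  rw [← sub_eq_zero, ← map_sub, ← hv, LinearMap.lsmul_apply, Nat.cast_smul_eq_nsmul, map_nsmul,
    ← Nat.cast_smul_eq_nsmul S, hT']

namespace KaehlerDifferential

variable {W S : Type*} [CommRing W] [CommRing S] [Algebra W S] {σ : S →+* S}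
  {Φ : Ω[S⁄W] →+ Ω[S⁄W]}

theorem map_smul_of_map_smul_D (hΦ : ∀ a b : S, Φ (a • D W S b) = σ a • D W S (σ b)) (r : S)
    (η : Ω[S⁄W]) : Φ (r • η) = σ r • Φ η := by
  have hη : η ∈ Submodule.span S (Set.range (D W S)) := by
    rw [span_range_derivation]; trivial
  induction hη using Submodule.span_induction generalizing r with
  | mem _ hx =>
    obtain ⟨b, rfl⟩ := hx
    rw [hΦ, ← one_smul S (D W S b), hΦ, map_one, one_smul]
  | zero => simp
  | add x y _ _ hx hy => rw [smul_add, map_add, map_add, hx, hy, smul_add]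
  | smul a x _ hx => rw [smul_smul, hx, map_mul, mul_smul, hx]

theorem exists_eq_smul_of_map_smul_D (p : ℕ) (hσ : ∀ x : S, σ x - x ^ p ∈ Ideal.span {(p : S)})
    (hΦ : ∀ a b : S, Φ (a • D W S b) = σ a • D W S (σ b)) (η : Ω[S⁄W]) :
    ∃ ω, Φ η = (p : S) • ω := by
  have hη : η ∈ Submodule.span S (Set.range (D W S)) := by
    rw [span_range_derivation]; trivial
  induction hη using Submodule.span_induction with
  | mem _ hx =>
    obtain ⟨b, rfl⟩ := hx
    obtain ⟨m, hm⟩ := Ideal.mem_span_singleton'.mp (hσ b)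
    have hΦD : Φ (D W S b) = D W S (σ b) := by simpa using hΦ 1 b
    -- `σ b = b ^ p + m p` and `d(b ^ p) = p b ^ (p - 1) db`
    refine ⟨b ^ (p - 1) • D W S b + D W S m, ?_⟩
    rw [hΦD, eq_add_of_sub_eq' hm.symm, map_add, Derivation.leibniz_pow, Derivation.leibniz,
      Derivation.map_natCast, smul_zero, zero_add, ← Nat.cast_smul_eq_nsmul S, smul_add]
  | zero => exact ⟨0, by simp⟩
  | add x y _ _ hx hy =>
    obtain ⟨u, hu⟩ := hx
    obtain ⟨v, hv⟩ := hy
    exact ⟨u + v, by rw [map_add, hu, hv, smul_add]⟩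
  | smul a x _ hx =>
    obtain ⟨u, hu⟩ := hx
    exact ⟨σ a • u, by rw [map_smul_of_map_smul_D hΦ, hu, smul_comm]⟩

end KaehlerDifferential

theorem AddMonoidHom.map_smul_of_map_mkQ_eq_of_eq_smul {S M : Type*} [CommRing S]
    [AddCommGroup M] [Module S M] {σ : S →+* S} {Φ : M →+ M}
    (hΦ : ∀ (r : S) (η : M), Φ (r • η) = σ r • Φ η) {q : S} (hdiv : ∀ η, ∃ ω, Φ η = q • ω)
    {N : Submodule S M} {c : M ⧸ N →+ M ⧸ N} (hc : ∀ η ω, Φ η = q • ω → c (N.mkQ η) = N.mkQ ω)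
    (r : S) (x : M ⧸ N) : c (r • x) = σ r • c x := by
  obtain ⟨η, rfl⟩ := N.mkQ_surjective x
  obtain ⟨ω, hω⟩ := hdiv η
  rw [← map_smul, hc _ _ hω, hc (r • η) (σ r • ω) (by rw [hΦ, hω, smul_comm]), map_smul]

section ConnectionBracket

variable {S : Type*} [CommRing S] {A M : Type*} [AddCommGroup A] [Module S A] [AddCommGroup M]
  [Module S M]

def connectionBracket (D : A →+ A ⊗[S] M) (d : A →ₗ[S] A) : A →+ A ⊗[S] M :=
  D.comp d.toAddMonoidHom - (TensorProduct.map d LinearMap.id).toAddMonoidHom.comp D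

theorem connectionBracket_apply (D : A →+ A ⊗[S] M) (d : A →ₗ[S] A) (a : A) :
    connectionBracket D d a = D (d a) - TensorProduct.map d LinearMap.id (D a) :=
  rfl

theorem connectionBracket_smul {D : A →+ A ⊗[S] M} {δ : S → M}
    (hD : ∀ (f : S) (a : A), D (f • a) = a ⊗ₜ δ f + f • D a) (d : A →ₗ[S] A) (r : S) (a : A) :
    connectionBracket D d (r • a) = r • connectionBracket D d a := by
  simp only [connectionBracket_apply, map_smul, hD, map_add, TensorProduct.map_tmul,
    LinearMap.id_apply, smul_sub]
  abel

theorem map_connectionBracket {A' M' : Type*} [AddCommGroup A'] [Module S A'] [AddCommGroup M']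
    [Module S M'] (πA : A →ₗ[S] A') (πM : M →ₗ[S] M') {D : A →+ A ⊗[S] M}
    {D' : A' →+ A' ⊗[S] M'} (hD : ∀ a, TensorProduct.map πA πM (D a) = D' (πA a))
    {d : A →ₗ[S] A} {d' : A' →ₗ[S] A'} (hd : ∀ a, d' (πA a) = πA (d a)) (a : A) :
    TensorProduct.map πA πM (connectionBracket D d a) = connectionBracket D' d' (πA a) := by
  have hmap (ξ : A ⊗[S] M) : TensorProduct.map πA πM (TensorProduct.map d LinearMap.id ξ) =
      TensorProduct.map d' LinearMap.id (TensorProduct.map πA πM ξ) := by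
    induction ξ using TensorProduct.induction_on <;> simp_all
  rw [connectionBracket_apply, connectionBracket_apply, map_sub, hD, hmap, hD, hd]

end ConnectionBracket

section FrobeniusPullback

variable {S : Type u} [CommRing S] {σ : S →+* S} {B M : Type*} [AddCommGroup B] [Module S B]
  [AddCommGroup M] [Module S M] {Φ : M →+ M} {H : B ⊗[S] M →+ Twist σ B ⊗[S] M}

theorem map_pullback_comm {d : B →ₗ[S] B} {Fd : Twist σ B →ₗ[S] Twist σ B}
    (hH : ∀ (b : B) (ω : M), H (b ⊗ₜ ω) = ((1 : S) ⊗ₜ[TwistSrc σ] b : Twist σ B) ⊗ₜ Φ ω)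
    (hFd : ∀ (f : S) (x : B), Fd (f ⊗ₜ[TwistSrc σ] x) = f ⊗ₜ[TwistSrc σ] d x) (ζ : B ⊗[S] M) :
    TensorProduct.map Fd LinearMap.id (H ζ) = H (TensorProduct.map d LinearMap.id ζ) := by
  induction ζ using TensorProduct.induction_on with
  | zero => simp
  | tmul b ω => simp [hH, hFd]
  | add ζ ξ hζ hξ => rw [map_add, map_add, hζ, hξ, map_add, map_add]

theorem connectionBracket_pullback_tmul {d : B →ₗ[S] B} {Fd : Twist σ B →ₗ[S] Twist σ B}
    (hH : ∀ (b : B) (ω : M), H (b ⊗ₜ ω) = ((1 : S) ⊗ₜ[TwistSrc σ] b : Twist σ B) ⊗ₜ Φ ω)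
    (hFd : ∀ (f : S) (x : B), Fd (f ⊗ₜ[TwistSrc σ] x) = f ⊗ₜ[TwistSrc σ] d x)
    {δ : S → M} {L : B →+ B ⊗[S] M} {nt : Twist σ B →+ Twist σ B ⊗[S] M}
    (hnt : ∀ (f : S) (x : B),
      nt (f ⊗ₜ[TwistSrc σ] x) = ((1 : S) ⊗ₜ[TwistSrc σ] x : Twist σ B) ⊗ₜ δ f + f • H (L x))
    (f : S) (x : B) :
    connectionBracket nt Fd (f ⊗ₜ[TwistSrc σ] x) = f • H (connectionBracket L d x) := by
  rw [connectionBracket_apply, connectionBracket_apply, hFd, hnt, hnt, map_add, map_smul,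
    TensorProduct.map_tmul, hFd, map_pullback_comm hH hFd, map_sub, smul_sub, LinearMap.id_apply]
  abel

theorem exists_smul_pullback_eq_smul_and_reduce {q : S} {NB : Submodule S B}
    {NM : Submodule S M} {NF : Submodule S (Twist σ (B ⧸ NB))}
    (hdiv : ∀ ω, ∃ ω', Φ ω = q • ω') {c : M ⧸ NM →+ M ⧸ NM}
    (hc : ∀ ω ω', Φ ω = q • ω' → c (NM.mkQ ω) = NM.mkQ ω')
    (hH : ∀ (b : B) (ω : M), H (b ⊗ₜ ω) = ((1 : S) ⊗ₜ[TwistSrc σ] b : Twist σ B) ⊗ₜ Φ ω)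
    {ρ : Twist σ B ⊗[S] M →+ (Twist σ (B ⧸ NB) ⧸ NF) ⊗[S] (M ⧸ NM)}
    (hρ : ∀ (f : S) (x : B) (ω : M),
      ρ ((f ⊗ₜ[TwistSrc σ] x) ⊗ₜ ω) = NF.mkQ (f ⊗ₜ[TwistSrc σ] NB.mkQ x) ⊗ₜ NM.mkQ ω)
    {G : (B ⧸ NB) ⊗[S] (M ⧸ NM) →+ (Twist σ (B ⧸ NB) ⧸ NF) ⊗[S] (M ⧸ NM)}
    (hG : ∀ a η, G (a ⊗ₜ η) = NF.mkQ ((1 : S) ⊗ₜ[TwistSrc σ] a) ⊗ₜ c η)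
    (f : S) (ζ : B ⊗[S] M) :
    ∃ u, f • H ζ = q • u ∧ ρ u = f • G (TensorProduct.map NB.mkQ NM.mkQ ζ) := by
  induction ζ using TensorProduct.induction_on with
  | zero => exact ⟨0, by simp, by simp⟩
  | tmul b ω =>
    obtain ⟨ω', hω'⟩ := hdiv ω
    refine ⟨(f ⊗ₜ[TwistSrc σ] b) ⊗ₜ ω', ?_, ?_⟩
    · rw [hH, hω', TensorProduct.tmul_smul, smul_comm, TensorProduct.smul_tmul', Twist.smul_tmul,
        mul_one]
    · rw [hρ, TensorProduct.map_tmul, hG, hc ω ω' hω', TensorProduct.smul_tmul', ← map_smul,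
        Twist.smul_tmul, mul_one]
  | add ζ ξ hζ hξ =>
    obtain ⟨u, hu, hρu⟩ := hζ
    obtain ⟨v, hv, hρv⟩ := hξ
    exact ⟨u + v, by rw [map_add, smul_add, hu, hv, smul_add],
      by rw [map_add, hρu, hρv, map_add, map_add, smul_add]⟩

end FrobeniusPullback

theorem p_curvature_formula_for_frobenius_pullback_connection
    (p : ℕ) [Fact p.Prime]
    (k : Type u) [Field k] [CharP k p] [PerfectRing k p]
    (Rt : Type u) [CommRing Rt] [Algebra (TruncatedWittVector p 2 k) Rt]
    -- `Ω¹_{R̃/W₂(k)}` is flat over `W₂(k)`: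
    (hΩflat : Module.Flat (TruncatedWittVector p 2 k)
      (KaehlerDifferential (TruncatedWittVector p 2 k) Rt))
    -- a free `R̃`-module `B` with an `R̃`-linear map `d̃`:
    (B : Type u) [AddCommGroup B] [Module Rt B] [Module.Free Rt B]
    (dt : B →ₗ[Rt] B)
    -- a Frobenius lift `F̃`:
    (Ft : Rt →+* Rt) (hFt : ∀ x : Rt, Ft x - x ^ p ∈ Ideal.span {(p : Rt)})
    -- the pullback `F̃^*` of 1-forms, `a·db ↦ F̃(a)·d(F̃ b)`:
    (Φ : KaehlerDifferential (TruncatedWittVector p 2 k) Rt →+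
      KaehlerDifferential (TruncatedWittVector p 2 k) Rt)
    (hΦ : ∀ a b : Rt,
      Φ (a • KaehlerDifferential.D (TruncatedWittVector p 2 k) Rt b) =
        Ft a • KaehlerDifferential.D (TruncatedWittVector p 2 k) Rt (Ft b))
    -- the induced map `H : B ⊗ Ω¹ → F̃^*B ⊗ Ω¹`, `b ⊗ ω ↦ (1 ⊗ b) ⊗ F̃^*ω`:
    (H : TensorProduct Rt B (KaehlerDifferential (TruncatedWittVector p 2 k) Rt) →+
      TensorProduct Rt (Twist Ft B) (KaehlerDifferential (TruncatedWittVector p 2 k) Rt))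
    (hH : ∀ (b : B) (ω : KaehlerDifferential (TruncatedWittVector p 2 k) Rt),
      H (b ⊗ₜ ω) = (((1 : Rt) ⊗ₜ[TwistSrc Ft] b : Twist Ft B)) ⊗ₜ[Rt] Φ ω)
    -- `F̃^*d̃ = id ⊗ d̃ : F̃^*B → F̃^*B`:
    (Ftd : Twist Ft B →ₗ[Rt] Twist Ft B)
    (hFtd : ∀ (f : Rt) (x : B), Ftd (f ⊗ₜ[TwistSrc Ft] x) = f ⊗ₜ[TwistSrc Ft] (dt x)) :
    -- `pB`, `A = B/pB`, `p·Ω¹`, `Ω¹_{R/k} = Ω¹/pΩ¹`, the reduction maps, `d = d̃ mod p`: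
    let pB : Submodule Rt B := LinearMap.range ((p : Rt) • (LinearMap.id : B →ₗ[Rt] B))
    let pΩ : Submodule Rt (KaehlerDifferential (TruncatedWittVector p 2 k) Rt) :=
      LinearMap.range ((p : Rt) • (LinearMap.id :
        KaehlerDifferential (TruncatedWittVector p 2 k) Rt →ₗ[Rt]
          KaehlerDifferential (TruncatedWittVector p 2 k) Rt))
    let κB := pB.mkQ
    let κΩ := pΩ.mkQ
    let dA : (B ⧸ pB) →ₗ[Rt] (B ⧸ pB) :=
      Submodule.mapQ pB pB dt (by rintro x ⟨y, rfl⟩; exact ⟨dt y, by simp⟩)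
    -- `F^*A = (F̃^*A)/p` and its reduction map:
    let pFA : Submodule Rt (Twist Ft (B ⧸ pB)) :=
      LinearMap.range ((p : Rt) • (LinearMap.id :
        Twist Ft (B ⧸ pB) →ₗ[Rt] Twist Ft (B ⧸ pB)))
    -- a connection `∇₀` on `A` relative to `k`:
    ∀ Dconn : (B ⧸ pB) →+
        TensorProduct Rt (B ⧸ pB) (KaehlerDifferential (TruncatedWittVector p 2 k) Rt ⧸ pΩ),
      (∀ (f : Rt) (m : B ⧸ pB),
        Dconn (f • m) =
          m ⊗ₜ[Rt] (κΩ (KaehlerDifferential.D (TruncatedWittVector p 2 k) Rt f)) +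
            f • Dconn m) →
    -- an additive lift `∇′₀` of `∇₀`:
    ∀ L0 : B →+ TensorProduct Rt B (KaehlerDifferential (TruncatedWittVector p 2 k) Rt),
      (∀ x : B, TensorProduct.map κB κΩ (L0 x) = Dconn (κB x)) →
    -- the Frobenius-pullback connection `∇̃` on `F̃^*B` determined by `∇₀` (Statement 8):
    ∀ nt : Twist Ft B →+
        TensorProduct Rt (Twist Ft B) (KaehlerDifferential (TruncatedWittVector p 2 k) Rt),
      (∀ (f : Rt) (x : B),
        nt (f ⊗ₜ[TwistSrc Ft] x) =
          (((1 : Rt) ⊗ₜ[TwistSrc Ft] x : Twist Ft B)) ⊗ₜ[Rt]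
            (KaehlerDifferential.D (TruncatedWittVector p 2 k) Rt f) + f • H (L0 x)) →
    -- the inverse Cartier operator `C⁻¹` (Statement 9):
    ∀ c : (KaehlerDifferential (TruncatedWittVector p 2 k) Rt ⧸ pΩ) →+
        (KaehlerDifferential (TruncatedWittVector p 2 k) Rt ⧸ pΩ),
      (∀ η ω : KaehlerDifferential (TruncatedWittVector p 2 k) Rt,
        Φ η = (p : Rt) • ω → c (κΩ η) = κΩ ω) →
    -- the reduction map `F̃^*B ⊗ Ω¹_{R̃/W₂} → F^*A ⊗ Ω¹_{R/k}`:
    ∀ ρ : TensorProduct Rt (Twist Ft B)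
          (KaehlerDifferential (TruncatedWittVector p 2 k) Rt) →+
        TensorProduct Rt (Twist Ft (B ⧸ pB) ⧸ pFA)
          (KaehlerDifferential (TruncatedWittVector p 2 k) Rt ⧸ pΩ),
      (∀ (f : Rt) (x : B) (ω : KaehlerDifferential (TruncatedWittVector p 2 k) Rt),
        ρ ((f ⊗ₜ[TwistSrc Ft] x) ⊗ₜ[Rt] ω) =
          (pFA.mkQ (f ⊗ₜ[TwistSrc Ft] (κB x))) ⊗ₜ[Rt] (κΩ ω)) →
    -- the Kodaira–Spencer map `κ = ∇₀∘d − (d ⊗ id)∘∇₀` and the commutator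
    -- `Θ = ∇̃∘(F̃^*d̃) − ((F̃^*d̃) ⊗ id)∘∇̃`:
    let ks : (B ⧸ pB) →+
        TensorProduct Rt (B ⧸ pB)
          (KaehlerDifferential (TruncatedWittVector p 2 k) Rt ⧸ pΩ) :=
      Dconn.comp dA.toAddMonoidHom -
        (TensorProduct.map dA (LinearMap.id)).toAddMonoidHom.comp Dconn
    let Θ : Twist Ft B →+
        TensorProduct Rt (Twist Ft B)
          (KaehlerDifferential (TruncatedWittVector p 2 k) Rt) :=
      letI : AddCommGroup (Twist Ft B →+
          TensorProduct Rt (Twist Ft B)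
            (KaehlerDifferential (TruncatedWittVector p 2 k) Rt)) :=
        @AddMonoidHom.instAddCommGroup _ _ _ TensorProduct.addCommGroup
      nt.comp Ftd.toAddMonoidHom -
        (TensorProduct.map Ftd (LinearMap.id)).toAddMonoidHom.comp nt
    -- (i) `Θ` takes values in `p·(F̃^*B ⊗ Ω¹)`:
    (∀ z : Twist Ft B,
      Θ z ∈ LinearMap.range ((p : Rt) • (LinearMap.id :
        TensorProduct Rt (Twist Ft B)
            (KaehlerDifferential (TruncatedWittVector p 2 k) Rt) →ₗ[Rt]
          TensorProduct Rt (Twist Ft B)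
            (KaehlerDifferential (TruncatedWittVector p 2 k) Rt)))) ∧
    -- (ii) `a ⊗ η ↦ (1 ⊗ a) ⊗ C⁻¹(η)` is a well-defined additive map, and there is a
    -- unique linear `C⁻¹(κ) : F^*A → F^*A ⊗ Ω¹_{R/k}` with `1 ⊗ x ↦ G (κ x)`:
    ((∃! G : TensorProduct Rt (B ⧸ pB)
          (KaehlerDifferential (TruncatedWittVector p 2 k) Rt ⧸ pΩ) →+
        TensorProduct Rt (Twist Ft (B ⧸ pB) ⧸ pFA)
          (KaehlerDifferential (TruncatedWittVector p 2 k) Rt ⧸ pΩ),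
      ∀ (a : B ⧸ pB) (η : KaehlerDifferential (TruncatedWittVector p 2 k) Rt ⧸ pΩ),
        G (a ⊗ₜ[Rt] η) =
          (pFA.mkQ ((1 : Rt) ⊗ₜ[TwistSrc Ft] a)) ⊗ₜ[Rt] (c η)) ∧
     (∀ G : TensorProduct Rt (B ⧸ pB)
          (KaehlerDifferential (TruncatedWittVector p 2 k) Rt ⧸ pΩ) →+
        TensorProduct Rt (Twist Ft (B ⧸ pB) ⧸ pFA)
          (KaehlerDifferential (TruncatedWittVector p 2 k) Rt ⧸ pΩ),
      (∀ (a : B ⧸ pB) (η : KaehlerDifferential (TruncatedWittVector p 2 k) Rt ⧸ pΩ),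
        G (a ⊗ₜ[Rt] η) =
          (pFA.mkQ ((1 : Rt) ⊗ₜ[TwistSrc Ft] a)) ⊗ₜ[Rt] (c η)) →
      ∃! CK : (Twist Ft (B ⧸ pB) ⧸ pFA) →ₗ[Rt]
          TensorProduct Rt (Twist Ft (B ⧸ pB) ⧸ pFA)
            (KaehlerDifferential (TruncatedWittVector p 2 k) Rt ⧸ pΩ),
        ∀ x : B ⧸ pB,
          CK (pFA.mkQ ((1 : Rt) ⊗ₜ[TwistSrc Ft] x)) = G (ks x))) ∧
    -- (iii) `[∇̃, F̃^*d̃]/p` reduced modulo `p` equals `C⁻¹(κ)`: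
    (∀ G : TensorProduct Rt (B ⧸ pB)
          (KaehlerDifferential (TruncatedWittVector p 2 k) Rt ⧸ pΩ) →+
        TensorProduct Rt (Twist Ft (B ⧸ pB) ⧸ pFA)
          (KaehlerDifferential (TruncatedWittVector p 2 k) Rt ⧸ pΩ),
      (∀ (a : B ⧸ pB) (η : KaehlerDifferential (TruncatedWittVector p 2 k) Rt ⧸ pΩ),
        G (a ⊗ₜ[Rt] η) =
          (pFA.mkQ ((1 : Rt) ⊗ₜ[TwistSrc Ft] a)) ⊗ₜ[Rt] (c η)) →
      ∀ CK : (Twist Ft (B ⧸ pB) ⧸ pFA) →ₗ[Rt]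
          TensorProduct Rt (Twist Ft (B ⧸ pB) ⧸ pFA)
            (KaehlerDifferential (TruncatedWittVector p 2 k) Rt ⧸ pΩ),
        (∀ x : B ⧸ pB,
          CK (pFA.mkQ ((1 : Rt) ⊗ₜ[TwistSrc Ft] x)) = G (ks x)) →
        ∀ (f : Rt) (x : B)
          (t : TensorProduct Rt (Twist Ft B)
            (KaehlerDifferential (TruncatedWittVector p 2 k) Rt)),
          Θ (f ⊗ₜ[TwistSrc Ft] x) = (p : Rt) • t →
            ρ t = CK (pFA.mkQ (f ⊗ₜ[TwistSrc Ft] (κB x)))) := by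
  intro pB pΩ κB κΩ dA pFA Dconn hDconn L0 hL0 nt hnt c hc ρ hρ ks Θ
  have hΦ_div := KaehlerDifferential.exists_eq_smul_of_map_smul_D p hFt hΦ
  have hc_smul := AddMonoidHom.map_smul_of_map_mkQ_eq_of_eq_smul
    (KaehlerDifferential.map_smul_of_map_smul_D hΦ) hΦ_div hc
  let j : (B ⧸ pB) →+ Twist Ft (B ⧸ pB) ⧸ pFA :=
    pFA.mkQ.toAddMonoidHom.comp (TensorProduct.mk (TwistSrc Ft) Rt (B ⧸ pB) 1).toAddMonoidHom
  have hj (r : Rt) (a : B ⧸ pB) : j (r • a) = Ft r • j a := by simp [j, Twist.one_tmul_smul]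
  have hΘ : ∀ f x, Θ (f ⊗ₜ[TwistSrc Ft] x) = f • H (connectionBracket L0 dt x) :=
    connectionBracket_pullback_tmul hH hFtd hnt
  have hks : ∀ x, TensorProduct.map κB κΩ (connectionBracket L0 dt x) = ks (κB x) :=
    map_connectionBracket κB κΩ hL0 fun _ => rfl
  have hρ_eq {t u : Twist Ft B ⊗[Rt] KaehlerDifferential (TruncatedWittVector p 2 k) Rt}
      (h : (p : Rt) • t = (p : Rt) • u) : ρ t = ρ u :=
    AddMonoidHom.map_eq_of_natCast_smul_eq
      (exact_lsmul_natCast_tensor_of_free (TruncatedWittVector.exact_lsmul_p p k))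
      (TensorProduct.smul_eq_zero_of_quotient_range_smul _) ρ h
  have hkey := fun G hG => exists_smul_pullback_eq_smul_and_reduce hΦ_div hc hH hρ (G := G) hG
  obtain ⟨G₀, hG₀, -⟩ := TensorProduct.existsUnique_tmul_semilinear j hj c hc_smul
  refine ⟨fun z => ?_, ⟨TensorProduct.existsUnique_tmul_semilinear j hj c hc_smul, fun G hG => ?_⟩,
    fun G hG CK hCK f x t ht => ?_⟩
  · induction z using TensorProduct.induction_on with
    | zero => exact map_zero Θ ▸ Submodule.zero_mem _
    | tmul f x =>
      obtain ⟨u, hu, -⟩ := hkey G₀ hG₀ f (connectionBracket L0 dt x)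
      exact ⟨u, by rw [hΘ, hu]; rfl⟩
    | add z w hz hw => exact map_add Θ z w ▸ Submodule.add_mem _ hz hw
  · refine Twist.existsUnique_linearMap_quotient (p : Rt) (G.comp ks) (fun r a => ?_)
      (TensorProduct.smul_eq_zero_of_quotient_range_smul _)
    rw [AddMonoidHom.comp_apply, AddMonoidHom.comp_apply, show ks (r • a) = r • ks a from connectionBracket_smul hDconn dA r a,
      TensorProduct.map_smul_of_tmul_semilinear hj hG]
  · obtain ⟨u, hu, hρu⟩ := hkey G hG f (connectionBracket L0 dt x)
    calc ρ t = ρ u := hρ_eq (by rw [← ht, hΘ, hu])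
      _ = f • CK (pFA.mkQ ((1 : Rt) ⊗ₜ[TwistSrc Ft] κB x)) := by rw [hρu, hks, hCK]
      _ = CK (pFA.mkQ (f ⊗ₜ[TwistSrc Ft] κB x)) := by
        rw [Twist.tmul_eq_smul_one_tmul f, map_smul, map_smul]
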